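/- arXiv:1604.07533 — 6 statements merged into one kernel-verified Lean document; each statement's English description precedes it below -/
import Mathlib

section
/- Let U : 𝓢(ℝⁿ) → 𝓢(ℝⁿ) satisfy U(f·g) = U(f)·U(g) for all f, g ∈ 𝓢(ℝⁿ). If f, g ∈ 𝓢(ℝⁿ) and g(x) = 1 for all x ∈ Supp f, then (U g)(y) = 1 for all y ∈ Supp (U f). -/
open MeasureTheory
open scoped FourierTransform ComplexConjugate

theorem stmt4 (n : ℕ)
    (U : SchwartzMap (EuclideanSpace ℝ (Fin n)) ℂ → SchwartzMap (EuclideanSpace ℝ (Fin n)) ℂ)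
    (h2 : ∀ f g fg : SchwartzMap (EuclideanSpace ℝ (Fin n)) ℂ,
      (∀ x, fg x = f x * g x) →
      ∀ x, U fg x = U f x * U g x)
    (f g : SchwartzMap (EuclideanSpace ℝ (Fin n)) ℂ)
    (hg : ∀ x ∈ tsupport (⇑f), g x = 1) :
    ∀ y ∈ tsupport (⇑(U f)), U g y = 1 := by
  have hfg : ∀ x, f x = f x * g x := by
    intro x
    by_cases hx : f x = 0
    · simp [hx]
    · rw [hg x (subset_tsupport _ hx), mul_one]
  have key := h2 f g f hfg
  have hsub : Function.support (⇑(U f)) ⊆ {y | U g y = 1} := by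
    intro y hy
    have := key y
    have : U f y * (U g y - 1) = 0 := by ring_nf; linear_combination -this
    rcases mul_eq_zero.mp this with h | h
    · exact absurd h hy
    · simpa [sub_eq_zero] using h
  intro y hy
  have hclosed : IsClosed {y | U g y = 1} :=
    isClosed_eq (U g).continuous continuous_const
  exact (hclosed.closure_subset_iff.mpr hsub) hy
end

section
/- Let U : 𝓢(ℝⁿ) → 𝓢(ℝⁿ) satisfy U(f·g) = U(f)·U(g) for all f, g ∈ 𝓢(ℝⁿ). If f ∈ 𝓢(ℝⁿ) has compact support, then U(f) has compact support. -/
open MeasureTheory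
open scoped FourierTransform ComplexConjugate

/-- A compactly supported smooth bump is a Schwartz function. -/
noncomputable def bumpSchwartz {n : ℕ}
    (b : ContDiffBump (0 : EuclideanSpace ℝ (Fin n))) :
    SchwartzMap (EuclideanSpace ℝ (Fin n)) ℂ where
  toFun := fun x => (b x : ℂ)
  smooth' := by exact Complex.ofRealCLM.contDiff.comp (b.contDiff (n := ⊤))
  decay' := by
    intro k m
    have hcs : HasCompactSupport (fun x => (b x : ℂ)) := by
      apply HasCompactSupport.intro
        (isCompact_closedBall (0 : EuclideanSpace ℝ (Fin n)) b.rOut)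
      intro x hx
      have hd : b.rOut ≤ dist x 0 :=
        le_of_lt (not_le.mp (by simpa [Metric.mem_closedBall] using hx))
      simp [b.zero_of_le_dist hd]
    have hsmooth : ContDiff ℝ ((⊤ : ℕ∞) : WithTop ℕ∞) (fun x => (b x : ℂ)) := by
      exact Complex.ofRealCLM.contDiff.comp (b.contDiff (n := ⊤))
    have hF : HasCompactSupport
        (fun x => ‖x‖ ^ k * ‖iteratedFDeriv ℝ m (fun x => (b x : ℂ)) x‖) :=
      ((hcs.iteratedFDeriv m).norm).mul_left
    have hFc : Continuous
        (fun x => ‖x‖ ^ k * ‖iteratedFDeriv ℝ m (fun x => (b x : ℂ)) x‖) :=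
      ((continuous_norm.pow k).mul
        (hsmooth.continuous_iteratedFDeriv (by exact_mod_cast le_top)).norm)
    obtain ⟨C, hC⟩ := hF.exists_bound_of_continuous hFc
    refine ⟨C, fun x => ?_⟩
    have h := hC x
    rwa [Real.norm_eq_abs, abs_of_nonneg (by positivity)] at h

theorem stmt5 (n : ℕ)
    (U : SchwartzMap (EuclideanSpace ℝ (Fin n)) ℂ → SchwartzMap (EuclideanSpace ℝ (Fin n)) ℂ)
    (h2 : ∀ f g fg : SchwartzMap (EuclideanSpace ℝ (Fin n)) ℂ,
      (∀ x, fg x = f x * g x) →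
      ∀ x, U fg x = U f x * U g x)
    (f : SchwartzMap (EuclideanSpace ℝ (Fin n)) ℂ) (hf : HasCompactSupport (⇑f)) :
    HasCompactSupport (⇑(U f)) := by
  -- choose a bump equal to 1 on the support of f
  obtain ⟨r, hr⟩ := hf.isBounded.subset_closedBall 0
  set R : ℝ := max r 1 with hR
  have hRpos : 0 < R := lt_of_lt_of_le one_pos (le_max_right _ _)
  let b : ContDiffBump (0 : EuclideanSpace ℝ (Fin n)) :=
    ⟨R, R + 1, hRpos, lt_add_one R⟩
  let g := bumpSchwartz b
  have hfg : ∀ x, f x = f x * g x := by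
    intro x
    by_cases hx : x ∈ tsupport (⇑f)
    · have hx' : x ∈ Metric.closedBall (0 : EuclideanSpace ℝ (Fin n)) R :=
        Metric.closedBall_subset_closedBall (le_max_left r 1) (hr hx)
      have hg1 : g x = 1 := by
        show ((b x : ℝ) : ℂ) = 1
        rw [b.one_of_mem_closedBall hx']
        norm_num
      rw [hg1, mul_one]
    · rw [image_eq_zero_of_notMem_tsupport hx, zero_mul]
  have key : ∀ x, U f x = U f x * U g x := h2 f g f hfg
  -- U g decays, so ‖U g x‖ < 1 outside a ball
  obtain ⟨C, hC⟩ := (U g).decay' 1 0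
  have hC0 : 0 ≤ C := le_trans (by positivity) (hC 0)
  apply HasCompactSupport.intro (isCompact_closedBall (0 : EuclideanSpace ℝ (Fin n)) (C + 1))
  intro x hx
  have hxn : C + 1 < ‖x‖ := by
    have := not_le.mp (by simpa [Metric.mem_closedBall] using hx)
    simpa [dist_zero_right] using this
  have hUg : ‖U g x‖ < 1 := by
    have h1 := hC x
    rw [pow_one, norm_iteratedFDeriv_zero] at h1
    have h1' : ‖x‖ * ‖U g x‖ ≤ C := h1
    have hxpos : 0 < ‖x‖ := lt_of_le_of_lt (by positivity) hxn
    by_contra h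
    push_neg at h
    have : ‖x‖ ≤ ‖x‖ * ‖U g x‖ := le_mul_of_one_le_right hxpos.le h
    linarith
  by_contra hne
  have hone : U g x = 1 :=
    (mul_left_cancel₀ hne (by rw [mul_one]; exact (key x).symm))
  rw [hone] at hUg
  simp at hUg
end

section
/- Let U : 𝓢(ℝⁿ) → 𝓢(ℝⁿ) be a bijection satisfying, for all f, g ∈ 𝓢(ℝⁿ): (1) U(f + g*) = U(f) + (U(g))*, where h*(x) := conj(h(−x)); (2) U(f·g) = U(f)·U(g); (3) U(f ⋆ g) = U(f) ⋆ U(g). Then for every x₀ ∈ ℝⁿ there exists y₀ ∈ ℝⁿ such that for every f ∈ 𝓢(ℝⁿ): (i) if x₀ ∈ Supp f then y₀ ∈ Supp (U f), and (ii) f(x₀) = 0 if and only if (U f)(y₀) = 0. -/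
open MeasureTheory
open scoped FourierTransform ComplexConjugate
open SchwartzMap ComplexConjugate
open scoped ContDiff

variable {E : Type*} [NormedAddCommGroup E] [NormedSpace ℝ E]

lemma SchwartzMap.hasTemperateGrowth' (f : 𝓢(E, ℂ)) : Function.HasTemperateGrowth (⇑f) := by
  refine ⟨f.smooth ⊤, fun m => ⟨0, SchwartzMap.seminorm ℝ 0 m f, fun x => ?_⟩⟩
  simpa using f.norm_iteratedFDeriv_le_seminorm ℝ m x

noncomputable def mulT (f : 𝓢(E, ℂ)) {g : E → ℂ} (hg : Function.HasTemperateGrowth g) :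
    𝓢(E, ℂ) := SchwartzMap.bilinLeftCLM (ContinuousLinearMap.mul ℝ ℂ) hg f

@[simp] lemma mulT_apply (f : 𝓢(E, ℂ)) {g : E → ℂ} (hg : Function.HasTemperateGrowth g) (x : E) :
    mulT f hg x = f x * g x := rfl

noncomputable def mulS (f g : 𝓢(E, ℂ)) : 𝓢(E, ℂ) := mulT f g.hasTemperateGrowth'

@[simp] lemma mulS_apply (f g : 𝓢(E, ℂ)) (x : E) : mulS f g x = f x * g x := rfl

noncomputable def conjS (f : 𝓢(E, ℂ)) : 𝓢(E, ℂ) where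
  toFun x := conj (f x)
  smooth' := Complex.conjCLE.toContinuousLinearMap.contDiff.comp (f.smooth ⊤)
  decay' k m := by
    obtain ⟨C, hC⟩ := f.decay' k m
    refine ⟨C, fun x => ?_⟩
    have : (fun y => conj (f y)) = (Complex.conjLIE ∘ ⇑f) := by
      funext y; simp [Complex.conjLIE]; rfl
    rw [this, Complex.conjLIE.norm_iteratedFDeriv_comp_left]
    exact hC x

@[simp] lemma conjS_apply (f : 𝓢(E, ℂ)) (x : E) : conjS f x = conj (f x) := rfl

noncomputable def negS (f : 𝓢(E, ℂ)) : 𝓢(E, ℂ) :=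
  SchwartzMap.compCLMOfContinuousLinearEquiv ℝ (ContinuousLinearEquiv.neg ℝ) f

@[simp] lemma negS_apply (f : 𝓢(E, ℂ)) (x : E) : negS f x = f (-x) := rfl

noncomputable def starS (f : 𝓢(E, ℂ)) : 𝓢(E, ℂ) := conjS (negS f)

@[simp] lemma starS_apply (f : 𝓢(E, ℂ)) (x : E) : starS f x = conj (f (-x)) := rfl

noncomputable def ofCS (f : E → ℂ) (hsm : ContDiff ℝ ∞ f) (hcs : HasCompactSupport f) :
    𝓢(E, ℂ) where
  toFun := f
  smooth' := hsm
  decay' k m := by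
    have hc : Continuous fun x : E => ‖x‖ ^ k * ‖iteratedFDeriv ℝ m f x‖ := by
      exact ((continuous_norm.pow k)).mul
        ((hsm.continuous_iteratedFDeriv (by exact_mod_cast le_top)).norm)
    have hcs' : HasCompactSupport fun x : E => ‖x‖ ^ k * ‖iteratedFDeriv ℝ m f x‖ :=
      ((hcs.iteratedFDeriv m).norm).mul_left
    obtain ⟨C, hC⟩ := hc.bounded_above_of_compact_support hcs'
    exact ⟨C, fun x => (Real.le_norm_self _).trans (hC x)⟩

@[simp] lemma ofCS_apply (f : E → ℂ) (hsm : ContDiff ℝ ∞ f) (hcs : HasCompactSupport f) (x : E) :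
    ofCS f hsm hcs x = f x := rfl

lemma schwartz_sum_apply {ι : Type*} (s : Finset ι) (f : ι → 𝓢(E, ℂ)) (x : E) :
    (∑ i ∈ s, f i) x = ∑ i ∈ s, f i x := by
  classical
  induction s using Finset.induction_on with
  | empty => simp
  | insert _ _ h ih => rw [Finset.sum_insert h, SchwartzMap.add_apply, ih, Finset.sum_insert h]

lemma bdd_smul {F : Type*} [NormedAddCommGroup F] [NormedSpace ℝ F] [NormedSpace ℂ F]
    [IsScalarTower ℝ ℂ F] {u : E → ℂ} {v : E → F}
    (hu : ContDiff ℝ ∞ u) (hv : ContDiff ℝ ∞ v) {N : ℕ} {Cu Cv : ℝ}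
    (hCu : ∀ m, m ≤ N → ∀ x, ‖iteratedFDeriv ℝ m u x‖ ≤ Cu)
    (hCv : ∀ m, m ≤ N → ∀ x, ‖iteratedFDeriv ℝ m v x‖ ≤ Cv)
    (hCu0 : 0 ≤ Cu) (hCv0 : 0 ≤ Cv) :
    ∀ m, m ≤ N → ∀ x, ‖iteratedFDeriv ℝ m (fun y => u y • v y) x‖ ≤ 2 ^ N * Cu * Cv := by
  intro m hm x
  calc ‖iteratedFDeriv ℝ m (fun y => u y • v y) x‖
      ≤ ∑ i ∈ Finset.range (m + 1),
        (m.choose i : ℝ) * ‖iteratedFDeriv ℝ i u x‖ * ‖iteratedFDeriv ℝ (m - i) v x‖ :=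
        norm_iteratedFDeriv_smul_le hu hv x (mod_cast le_top)
    _ ≤ ∑ i ∈ Finset.range (m + 1), (m.choose i : ℝ) * Cu * Cv := by
        refine Finset.sum_le_sum fun i hi => ?_
        have hi' : i ≤ N := le_trans (Nat.le_of_lt_succ (Finset.mem_range.mp hi)) hm
        have hmi : m - i ≤ N := le_trans (Nat.sub_le _ _) hm
        have h1 := hCu i hi' x
        have h2 := hCv (m - i) hmi x
        have c0 : (0 : ℝ) ≤ (m.choose i : ℝ) := by positivity
        exact mul_le_mul (mul_le_mul_of_nonneg_left h1 c0) h2 (norm_nonneg _)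
          (by positivity)
    _ = (2 : ℝ) ^ m * Cu * Cv := by
        rw [← Finset.sum_mul, ← Finset.sum_mul]
        norm_cast
        rw [Nat.sum_range_choose]
    _ ≤ 2 ^ N * Cu * Cv :=
        mul_le_mul_of_nonneg_right (mul_le_mul_of_nonneg_right
          (pow_le_pow_right₀ one_le_two hm) hCu0) hCv0

lemma hasTemperateGrowth_inv {g : E → ℂ} (hg : ContDiff ℝ ∞ g)
    (hbd : ∀ m : ℕ, ∃ C : ℝ, 0 ≤ C ∧ ∀ x, ‖iteratedFDeriv ℝ m g x‖ ≤ C)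
    {δ : ℝ} (hδ : 0 < δ) (hlow : ∀ x, δ ≤ ‖g x‖) :
    Function.HasTemperateGrowth fun x => (g x)⁻¹ := by
  have hne : ∀ x, g x ≠ 0 := fun x hx => by
    have := hlow x; rw [hx, norm_zero] at this; linarith
  have hqsm : ContDiff ℝ ∞ fun x => (g x)⁻¹ := hg.inv hne
  have hg' : ContDiff ℝ ∞ (fderiv ℝ g) := hg.fderiv_right (le_of_eq (by simp))
  -- uniform bounds for g
  have hbdU : ∀ N : ℕ, ∃ C : ℝ, 0 ≤ C ∧ ∀ m, m ≤ N → ∀ x, ‖iteratedFDeriv ℝ m g x‖ ≤ C := by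
    intro N
    induction N with
    | zero =>
      obtain ⟨C, hC0, hC⟩ := hbd 0
      exact ⟨C, hC0, fun m hm x => by rw [Nat.le_zero.mp hm]; exact hC x⟩
    | succ N ih =>
      obtain ⟨C, hC0, hC⟩ := ih
      obtain ⟨C', hC'0, hC'⟩ := hbd (N + 1)
      refine ⟨max C C', le_max_of_le_left hC0, fun m hm x => ?_⟩
      rcases Nat.lt_succ_iff_lt_or_eq.mp (Nat.lt_succ_of_le hm) with h | h
      · exact le_trans (hC m (Nat.lt_succ_iff.mp h) x) (le_max_left _ _)
      · rw [h]; exact le_trans (hC' x) (le_max_right _ _)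
  -- derivative formula
  have hfq : fderiv ℝ (fun x => (g x)⁻¹) =
      fun x => -((g x)⁻¹ • (g x)⁻¹ • fderiv ℝ g x) := by
    funext x
    have h1 : HasFDerivAt Inv.inv
        (-ContinuousLinearMap.mulLeftRight ℝ ℂ (g x)⁻¹ (g x)⁻¹) (g x) :=
      hasFDerivAt_inv' (hne x)
    have h2 : HasFDerivAt g (fderiv ℝ g x) x :=
      (hg.differentiable (by simp) x).hasFDerivAt
    have h3 : HasFDerivAt (fun y => (g y)⁻¹)
        ((-ContinuousLinearMap.mulLeftRight ℝ ℂ (g x)⁻¹ (g x)⁻¹).comp (fderiv ℝ g x)) x :=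
      h1.comp x h2
    rw [h3.fderiv]
    ext v
    simp [ContinuousLinearMap.mulLeftRight_apply, smul_eq_mul]
    ring
  have hsmul1 : ContDiff ℝ ∞ fun x => (g x)⁻¹ • fderiv ℝ g x :=
    hqsm.smul hg'
  -- main induction
  have main : ∀ N : ℕ, ∃ C : ℝ, 0 ≤ C ∧ ∀ m, m ≤ N → ∀ x,
      ‖iteratedFDeriv ℝ m (fun x => (g x)⁻¹) x‖ ≤ C := by
    intro N
    induction N with
    | zero =>
      refine ⟨δ⁻¹, by positivity, fun m hm x => ?_⟩
      rw [Nat.le_zero.mp hm, norm_iteratedFDeriv_zero, norm_inv]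
      exact inv_anti₀ hδ (hlow x)
    | succ N ih =>
      obtain ⟨Cq, hCq0, hCq⟩ := ih
      obtain ⟨Cg, hCg0, hCg⟩ := hbdU (N + 1)
      -- bounds for fderiv g up to order N
      have hCg' : ∀ m, m ≤ N → ∀ x, ‖iteratedFDeriv ℝ m (fderiv ℝ g) x‖ ≤ Cg := by
        intro m hm x
        rw [norm_iteratedFDeriv_fderiv]
        exact hCg (m + 1) (by omega) x
      have hb1 := bdd_smul hqsm hg' hCq hCg' hCq0 hCg0
      have hb2 := bdd_smul hqsm hsmul1 hCq hb1 hCq0 (by positivity)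
      refine ⟨max Cq (2 ^ N * Cq * (2 ^ N * Cq * Cg)), le_max_of_le_left hCq0,
        fun m hm x => ?_⟩
      rcases Nat.lt_succ_iff_lt_or_eq.mp (Nat.lt_succ_of_le hm) with h | h
      · exact le_trans (hCq m (Nat.lt_succ_iff.mp h) x) (le_max_left _ _)
      · rw [h, ← norm_iteratedFDeriv_fderiv, hfq]
        have : (fun x => -((g x)⁻¹ • (g x)⁻¹ • fderiv ℝ g x)) =
            -fun x => (g x)⁻¹ • (g x)⁻¹ • fderiv ℝ g x := rfl
        rw [this, iteratedFDeriv_neg_apply, norm_neg]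
        exact le_trans (hb2 N le_rfl x) (le_max_right _ _)
  refine ⟨hqsm, fun m => ?_⟩
  obtain ⟨C, hC0, hC⟩ := main m
  exact ⟨0, C, fun x => by simpa using hC m le_rfl x⟩

lemma exists_schwartz_bump {E : Type*} [NormedAddCommGroup E] [InnerProductSpace ℝ E]
    [FiniteDimensional ℝ E] (c : E) {ε : ℝ} (hε : 0 < ε) :
    ∃ ψ : 𝓢(E, ℂ), ψ c = 1 ∧ Function.support ⇑ψ ⊆ Metric.ball c ε := by
  let φ : ContDiffBump c := ⟨ε / 2, ε, half_pos hε, half_lt_self hε⟩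
  have hsm : ContDiff ℝ ∞ fun x => (φ x : ℂ) :=
    Complex.ofRealCLM.contDiff.comp φ.contDiff
  have hcs : HasCompactSupport fun x => (φ x : ℂ) :=
    φ.hasCompactSupport.comp_left (g := fun r : ℝ => (r : ℂ)) (by simp)
  refine ⟨ofCS _ hsm hcs, ?_, ?_⟩
  · rw [ofCS_apply]
    rw [φ.one_of_mem_closedBall (Metric.mem_closedBall_self (by positivity))]
    simp
  · intro x hx
    simp only [Function.mem_support, ofCS_apply, ne_eq, Complex.ofReal_eq_zero] at hx
    have hx' : x ∈ Function.support φ := hx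
    rwa [φ.support_eq] at hx'

open MeasureTheory
open scoped FourierTransform

set_option maxHeartbeats 1000000 in
theorem stmt6 (n : ℕ)
    (U : SchwartzMap (EuclideanSpace ℝ (Fin n)) ℂ → SchwartzMap (EuclideanSpace ℝ (Fin n)) ℂ)
    (hbij : Function.Bijective U)
    (h1 : ∀ f g fg : SchwartzMap (EuclideanSpace ℝ (Fin n)) ℂ,
      (∀ x, fg x = f x + conj (g (-x))) →
      ∀ x, U fg x = U f x + conj (U g (-x)))
    (h2 : ∀ f g fg : SchwartzMap (EuclideanSpace ℝ (Fin n)) ℂ,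
      (∀ x, fg x = f x * g x) →
      ∀ x, U fg x = U f x * U g x)
    (h3 : ∀ f g fg : SchwartzMap (EuclideanSpace ℝ (Fin n)) ℂ,
      (∀ x, fg x = ∫ y, f (x - y) * g y) →
      ∀ x, U fg x = ∫ y, U f (x - y) * U g y) :
    ∀ x₀ : EuclideanSpace ℝ (Fin n), ∃ y₀ : EuclideanSpace ℝ (Fin n),
      ∀ f : SchwartzMap (EuclideanSpace ℝ (Fin n)) ℂ,
        (x₀ ∈ tsupport (⇑f) → y₀ ∈ tsupport (⇑(U f))) ∧
        (f x₀ = 0 ↔ U f y₀ = 0) := by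
  classical
  intro x₀
  -- Step 1 : basic algebraic consequences of the hypotheses
  have U0 : U 0 = 0 := by
    have h := h1 0 0 0 (fun x => by simp)
    refine SchwartzMap.ext fun x => ?_
    have hx := h (-x)
    rw [neg_neg] at hx
    have h0 : conj (U 0 x) = 0 := by
      have := hx
      rw [left_eq_add] at this
      exact this
    simpa using congrArg conj h0
  have Ustar : ∀ g : SchwartzMap (EuclideanSpace ℝ (Fin n)) ℂ, ∀ x,
      U (starS g) x = conj (U g (-x)) := by
    intro g x
    have := h1 0 g (starS g) (fun y => by simp) x
    rw [U0] at this
    simpa using this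
  have Uadd : ∀ f h : SchwartzMap (EuclideanSpace ℝ (Fin n)) ℂ, U (f + h) = U f + U h := by
    intro f h
    have hst : starS (starS h) = h := SchwartzMap.ext fun x => by simp
    have key := h1 f (starS h) (f + h) (fun y => by simp)
    refine SchwartzMap.ext fun x => ?_
    rw [SchwartzMap.add_apply, key x, ← Ustar (starS h) x, hst]
  have Umul : ∀ f h : SchwartzMap (EuclideanSpace ℝ (Fin n)) ℂ, ∀ x,
      U (mulS f h) x = U f x * U h x := fun f h => h2 f h (mulS f h) fun y => rfl
  -- Step 2 : dichotomy on the existence of a common zero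
  by_cases hex : ∃ y₀ : EuclideanSpace ℝ (Fin n),
      ∀ f : SchwartzMap (EuclideanSpace ℝ (Fin n)) ℂ, f x₀ = 0 → U f y₀ = 0
  · obtain ⟨y₀, hy₀⟩ := hex
    have key : ∀ f : SchwartzMap (EuclideanSpace ℝ (Fin n)) ℂ, (f x₀ = 0 ↔ U f y₀ = 0) := by
      intro f
      refine ⟨hy₀ f, fun hUf => ?_⟩
      by_contra hfx
      have hall : ∀ g : SchwartzMap (EuclideanSpace ℝ (Fin n)) ℂ, U g y₀ = 0 := by
        intro g
        set c := f x₀ with hc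
        set g' : SchwartzMap (EuclideanSpace ℝ (Fin n)) ℂ := (c⁻¹ : ℂ) • g with hg'
        set p : SchwartzMap (EuclideanSpace ℝ (Fin n)) ℂ := mulS g' f with hp
        have hgp : (g - p) x₀ = 0 := by
          simp only [SchwartzMap.sub_apply, hp, mulS_apply, hg', SchwartzMap.smul_apply,
            smul_eq_mul, ← hc]
          field_simp
          ring
        have e1 : U g y₀ = U (g - p) y₀ + U p y₀ := by
          conv_lhs => rw [show g = (g - p) + p by abel]
          rw [Uadd, SchwartzMap.add_apply]
        rw [e1, hy₀ _ hgp, Umul g' f y₀, hUf, mul_zero, add_zero]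
      obtain ⟨ψ, hψ1, -⟩ := exists_schwartz_bump y₀ one_pos
      obtain ⟨g, hg⟩ := hbij.2 ψ
      have := hall g
      rw [hg, hψ1] at this
      exact one_ne_zero this
    refine ⟨y₀, fun f => ⟨?_, key f⟩⟩
    intro hx₀
    by_contra hy₀n
    have hopen : IsOpen (tsupport (⇑(U f)))ᶜ := (isClosed_tsupport _).isOpen_compl
    obtain ⟨ε, hε, hball⟩ := Metric.isOpen_iff.mp hopen y₀ hy₀n
    obtain ⟨ψ, hψ1, hψsupp⟩ := exists_schwartz_bump y₀ hε
    obtain ⟨g, hg⟩ := hbij.2 ψ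
    have hzero : U (mulS g f) = U 0 := by
      rw [U0]
      refine SchwartzMap.ext fun x => ?_
      rw [Umul g f x, hg, SchwartzMap.zero_apply]
      by_cases hx : x ∈ Metric.ball y₀ ε
      · rw [image_eq_zero_of_notMem_tsupport (hball hx), mul_zero]
      · rw [Function.notMem_support.mp fun hs => hx (hψsupp hs), zero_mul]
    have hz2 : mulS g f = 0 := hbij.1 hzero
    have hgx : g x₀ ≠ 0 := by
      intro h0
      have := (key g).mp h0
      rw [hg, hψ1] at this
      exact one_ne_zero this
    have hsupp : Function.support ⇑f ⊆ {x | g x = 0} := by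
      intro x hx
      have hgf : g x * f x = 0 := by
        have := congrArg (fun F : SchwartzMap (EuclideanSpace ℝ (Fin n)) ℂ => F x) hz2
        simpa [mulS_apply] using this
      rcases mul_eq_zero.mp hgf with h | h
      · exact h
      · exact absurd h (Function.mem_support.mp hx)
    have hclosed : IsClosed {x : EuclideanSpace ℝ (Fin n) | g x = 0} :=
      isClosed_eq g.continuous continuous_const
    exact hgx (closure_minimal hsupp hclosed hx₀)
  · exfalso
    push_neg at hex
    choose fy hfy0 hfyne using hex
    obtain ⟨g₀, hg₀1, -⟩ := exists_schwartz_bump x₀ one_pos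
    set e : SchwartzMap (EuclideanSpace ℝ (Fin n)) ℂ := U g₀ with he
    set K : Set (EuclideanSpace ℝ (Fin n)) := {y | ‖1 - e y‖ ≤ 3 / 4} with hK
    have hKclosed : IsClosed K :=
      isClosed_le (continuous_const.sub e.continuous).norm continuous_const
    have hKcompact : IsCompact K := by
      set C := SchwartzMap.seminorm ℝ 1 0 e with hC
      have hCb : ∀ y : EuclideanSpace ℝ (Fin n), ‖y‖ * ‖e y‖ ≤ C := fun y => by
        simpa using SchwartzMap.norm_pow_mul_le_seminorm ℝ e 1 y
      refine (isCompact_closedBall (0 : EuclideanSpace ℝ (Fin n)) (4 * C)).of_isClosed_subset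
        hKclosed ?_
      intro y hy
      have hy' : ‖1 - e y‖ ≤ 3 / 4 := hy
      have h4 : (1 : ℝ) / 4 ≤ ‖e y‖ := by
        have hns := norm_sub_norm_le (1 : ℂ) (1 - e y)
        rw [sub_sub_cancel, norm_one] at hns
        linarith
      rw [Metric.mem_closedBall, dist_zero_right]
      nlinarith [hCb y, norm_nonneg y]
    have hcover : K ⊆ ⋃ y : EuclideanSpace ℝ (Fin n), {x | U (fy y) x ≠ 0} :=
      fun z hz => Set.mem_iUnion.mpr ⟨z, hfyne z⟩
    obtain ⟨t, ht⟩ := hKcompact.elim_finite_subcover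
      (fun y : EuclideanSpace ℝ (Fin n) => {x | U (fy y) x ≠ 0})
      (fun y => isOpen_ne.preimage (U (fy y)).continuous) hcover
    set F : SchwartzMap (EuclideanSpace ℝ (Fin n)) ℂ :=
      ∑ i ∈ t, mulS (U (fy i)) (conjS (U (fy i))) with hF
    have hFval : ∀ x, F x = ((∑ i ∈ t, Complex.normSq (U (fy i) x) : ℝ) : ℂ) := by
      intro x
      rw [hF, schwartz_sum_apply]
      push_cast
      exact Finset.sum_congr rfl fun i _ => by
        rw [mulS_apply, conjS_apply, Complex.mul_conj]
    have hFmem : ∃ mF : SchwartzMap (EuclideanSpace ℝ (Fin n)) ℂ,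
        mF x₀ = 0 ∧ U mF = F := by
      have hterm : ∀ i : EuclideanSpace ℝ (Fin n),
          ∃ m : SchwartzMap (EuclideanSpace ℝ (Fin n)) ℂ,
            m x₀ = 0 ∧ U m = mulS (U (fy i)) (conjS (U (fy i))) := by
        intro i
        obtain ⟨c, hc⟩ := hbij.2 (conjS (U (fy i)))
        refine ⟨mulS (fy i) c, by simp [mulS_apply, hfy0 i], SchwartzMap.ext fun x => ?_⟩
        rw [Umul, hc, mulS_apply]
      choose m hm0 hmU using hterm
      refine ⟨∑ i ∈ t, m i, ?_, ?_⟩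
      · rw [schwartz_sum_apply]
        exact Finset.sum_eq_zero fun i _ => hm0 i
      · have hUsum : ∀ s : Finset (EuclideanSpace ℝ (Fin n)),
            U (∑ i ∈ s, m i) = ∑ i ∈ s, U (m i) := by
          intro s
          induction s using Finset.induction_on with
          | empty => simpa using U0
          | insert _ _ hnot ih => rw [Finset.sum_insert hnot, Uadd, ih, Finset.sum_insert hnot]
        rw [hUsum, hF]
        exact Finset.sum_congr rfl fun i _ => hmU i
    obtain ⟨mF, hmF0, hmFU⟩ := hFmem
    set Dre : EuclideanSpace ℝ (Fin n) → ℝ :=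
      fun x => (∑ i ∈ t, Complex.normSq (U (fy i) x)) + Complex.normSq (1 - e x) with hDre
    have hsumnn : ∀ x, 0 ≤ ∑ i ∈ t, Complex.normSq (U (fy i) x) :=
      fun x => Finset.sum_nonneg fun i _ => Complex.normSq_nonneg _
    have hDreK : ∀ x ∈ K, 0 < Dre x := by
      intro x hx
      obtain ⟨i, hit, hxi⟩ := Set.mem_iUnion₂.mp (ht hx)
      have h1' : 0 < ∑ i ∈ t, Complex.normSq (U (fy i) x) :=
        Finset.sum_pos' (fun j _ => Complex.normSq_nonneg _)
          ⟨i, hit, Complex.normSq_pos.mpr hxi⟩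
      have := Complex.normSq_nonneg (1 - e x)
      rw [hDre]; dsimp only; linarith
    have hDreOff : ∀ x, x ∉ K → (9 : ℝ) / 16 ≤ Dre x := by
      intro x hx
      have h34 : (3 : ℝ) / 4 < ‖1 - e x‖ := lt_of_not_ge hx
      have hns : Complex.normSq (1 - e x) = ‖1 - e x‖ ^ 2 := by
        rw [← Complex.sq_norm]
      have h916 : (9 : ℝ) / 16 ≤ Complex.normSq (1 - e x) := by
        rw [hns]; nlinarith [norm_nonneg (1 - e x)]
      have := hsumnn x
      rw [hDre]; dsimp only; linarith
    obtain ⟨δ, hδ, hδle⟩ : ∃ δ : ℝ, 0 < δ ∧ ∀ x, δ ≤ Dre x := by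
      have hDcont : Continuous Dre := by
        refine Continuous.add ?_ (Complex.continuous_normSq.comp
          (continuous_const.sub e.continuous))
        exact continuous_finset_sum t fun i _ =>
          Complex.continuous_normSq.comp (U (fy i)).continuous
      rcases K.eq_empty_or_nonempty with hKe | hKne
      · exact ⟨9 / 16, by norm_num, fun x => hDreOff x (by simp [hKe])⟩
      · obtain ⟨z, hzK, hzmin⟩ := hKcompact.exists_isMinOn hKne hDcont.continuousOn
        refine ⟨min (Dre z) (9 / 16), lt_min (hDreK z hzK) (by norm_num), fun x => ?_⟩
        by_cases hx : x ∈ K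
        · exact le_trans (min_le_left _ _) (hzmin hx)
        · exact le_trans (min_le_right _ _) (hDreOff x hx)
    set S : SchwartzMap (EuclideanSpace ℝ (Fin n)) ℂ :=
      F - e - conjS e + mulS e (conjS e) with hS
    set D : EuclideanSpace ℝ (Fin n) → ℂ := fun x => 1 + S x with hD
    have hDexp : ∀ x, D x = F x + (1 - e x) * (1 - conj (e x)) := by
      intro x
      rw [hD]
      simp only [hS, SchwartzMap.sub_apply, SchwartzMap.add_apply, mulS_apply, conjS_apply]
      ring
    have hDval : ∀ x, D x = ((Dre x : ℝ) : ℂ) := by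
      intro x
      have h2c : (1 - e x) * conj (1 - e x) = (Complex.normSq (1 - e x) : ℂ) :=
        Complex.mul_conj _
      rw [map_sub, map_one] at h2c
      rw [hDexp x, h2c, hFval x, hDre]
      push_cast
      ring
    have hDnorm : ∀ x, δ ≤ ‖D x‖ := by
      intro x
      rw [hDval x, Complex.norm_real]
      exact le_trans (hδle x) (Real.le_norm_self _)
    have hDne : ∀ x, D x ≠ 0 := by
      intro x hx
      have := hDnorm x
      rw [hx, norm_zero] at this
      linarith
    have hDsm : ContDiff ℝ ∞ D := contDiff_const.add (S.smooth ⊤)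
    have hDbd : ∀ m : ℕ, ∃ C : ℝ, 0 ≤ C ∧ ∀ x, ‖iteratedFDeriv ℝ m D x‖ ≤ C := by
      intro m
      refine ⟨1 + SchwartzMap.seminorm ℝ 0 m S, by positivity, fun x => ?_⟩
      have heq : iteratedFDeriv ℝ m D x =
          iteratedFDeriv ℝ m (fun _ : EuclideanSpace ℝ (Fin n) => (1 : ℂ)) x +
          iteratedFDeriv ℝ m (⇑S) x := by
        rw [hD]
        exact iteratedFDeriv_add_apply contDiff_const.contDiffAt (S.smooth _).contDiffAt
      rw [heq]
      refine le_trans (norm_add_le _ _) (add_le_add ?_ ?_)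
      · rcases Nat.eq_zero_or_pos m with hm | hm
        · subst hm; simp [norm_iteratedFDeriv_zero]
        · rw [iteratedFDeriv_const_of_ne (by omega : m ≠ 0)]
          simp
      · exact S.norm_iteratedFDeriv_le_seminorm ℝ m x
    have hq : Function.HasTemperateGrowth fun x => (D x)⁻¹ :=
      hasTemperateGrowth_inv hDsm hDbd hδ hDnorm
    set u₁ : SchwartzMap (EuclideanSpace ℝ (Fin n)) ℂ := mulT e hq with hu₁
    set A1 : SchwartzMap (EuclideanSpace ℝ (Fin n)) ℂ := mulS u₁ F with hA1
    set gg : SchwartzMap (EuclideanSpace ℝ (Fin n)) ℂ := u₁ - mulS u₁ (conjS e) with hgg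
    have hA1mem : ∃ m1 : SchwartzMap (EuclideanSpace ℝ (Fin n)) ℂ,
        m1 x₀ = 0 ∧ U m1 = A1 := by
      obtain ⟨w, hw⟩ := hbij.2 u₁
      refine ⟨mulS w mF, by simp [mulS_apply, hmF0], SchwartzMap.ext fun x => ?_⟩
      rw [Umul, hw, hmFU, hA1, mulS_apply]
    have hA2mem : ∃ m2 : SchwartzMap (EuclideanSpace ℝ (Fin n)) ℂ,
        m2 x₀ = 0 ∧ U m2 = gg - mulS gg e := by
      obtain ⟨g'', hg''⟩ := hbij.2 gg
      refine ⟨g'' - mulS g'' g₀, by simp [mulS_apply, hg₀1], SchwartzMap.ext fun x => ?_⟩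
      have hsplit : g'' = (g'' - mulS g'' g₀) + mulS g'' g₀ := by abel
      have hval : U g'' x = U (g'' - mulS g'' g₀) x + U (mulS g'' g₀) x := by
        conv_lhs => rw [hsplit]
        rw [Uadd, SchwartzMap.add_apply]
      have hmul := Umul g'' g₀ x
      rw [SchwartzMap.sub_apply, mulS_apply, ← hg'', he]
      linear_combination -hval - hmul
    obtain ⟨m1, hm10, hm1U⟩ := hA1mem
    obtain ⟨m2, hm20, hm2U⟩ := hA2mem
    have hfinal : U (m1 + m2) = U g₀ := by
      rw [Uadd, hm1U, hm2U]
      refine SchwartzMap.ext fun x => ?_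
      have hinv : (D x)⁻¹ * D x = 1 := inv_mul_cancel₀ (hDne x)
      have hdx := hDexp x
      have hvalu : u₁ x = e x * (D x)⁻¹ := by rw [hu₁, mulT_apply]
      have hval1 : A1 x = e x * (D x)⁻¹ * F x := by rw [hA1, mulS_apply, hvalu]
      have hval2 : gg x = e x * (D x)⁻¹ - e x * (D x)⁻¹ * conj (e x) := by
        rw [hgg, SchwartzMap.sub_apply, mulS_apply, conjS_apply, hvalu]
      have hval3 : mulS gg e x = gg x * e x := mulS_apply _ _ _
      rw [SchwartzMap.add_apply, SchwartzMap.sub_apply, hval3, hval1, hval2, ← he]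
      linear_combination (-(e x * (D x)⁻¹)) * hdx + e x * hinv
    have hmg : m1 + m2 = g₀ := hbij.1 hfinal
    have h0 : (m1 + m2) x₀ = g₀ x₀ := by rw [hmg]
    rw [SchwartzMap.add_apply, hm10, hm20, hg₀1] at h0
    simpa using h0
end

section
/- Let U : 𝓢(ℝⁿ) → 𝓢(ℝⁿ) be a bijection satisfying, for all f, g ∈ 𝓢(ℝⁿ): (1) U(f + g*) = U(f) + (U(g))*, where h*(x) := conj(h(−x)); (2) U(f·g) = U(f)·U(g); (3) U(f ⋆ g) = U(f) ⋆ U(g). Fix x₀ ∈ ℝⁿ. If y₁, y₂ ∈ ℝⁿ both have the property that for every f ∈ 𝓢(ℝⁿ) with f(x₀) ≠ 0 one has (U f)(y_j) ≠ 0 (j = 1, 2), then y₁ = y₂. -/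
open MeasureTheory SchwartzMap Metric
open scoped FourierTransform ComplexConjugate ContDiff

section Aux

variable {E : Type*} [NormedAddCommGroup E] [NormedSpace ℝ E]

private lemma schwartz_hasTemperateGrowth (f : 𝓢(E, ℂ)) :
    Function.HasTemperateGrowth (f : E → ℂ) := by
  refine ⟨f.smooth', fun n => ?_⟩
  obtain ⟨C, _, hC⟩ := f.decay 0 n
  exact ⟨0, C, fun x => by simpa using hC x⟩

/-- pointwise product of Schwartz maps -/
private noncomputable def mulSM (f g : 𝓢(E, ℂ)) : 𝓢(E, ℂ) :=
  SchwartzMap.bilinLeftCLM (ContinuousLinearMap.mul ℝ ℂ) (schwartz_hasTemperateGrowth g) f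

@[simp] private lemma mulSM_apply (f g : 𝓢(E, ℂ)) (x : E) : mulSM f g x = f x * g x := rfl

/-- the star of a Schwartz map, `x ↦ conj (f (-x))` -/
private noncomputable def starSM (f : 𝓢(E, ℂ)) : 𝓢(E, ℂ) where
  toFun := fun x => conj (f (-x))
  smooth' := Complex.conjLIE.toLinearIsometry.toContinuousLinearMap.contDiff.comp
      (f.smooth'.comp contDiff_neg)
  decay' := by
    intro k n
    obtain ⟨C, hC⟩ := f.decay' k n
    refine ⟨C, fun x => ?_⟩
    have h1 : (fun x : E => conj (f (-x)))
        = ⇑Complex.conjLIE ∘ (⇑f ∘ ⇑(LinearIsometryEquiv.neg ℝ (E := E))) := rfl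
    rw [h1, LinearIsometryEquiv.norm_iteratedFDeriv_comp_left,
      LinearIsometryEquiv.norm_iteratedFDeriv_comp_right]
    have hCx := hC (-x)
    rw [norm_neg] at hCx
    exact hCx

@[simp] private lemma starSM_apply (f : 𝓢(E, ℂ)) (x : E) : starSM f x = conj (f (-x)) := rfl

/-- a bump function as a Schwartz map -/
private noncomputable def bumpSM [FiniteDimensional ℝ E] [HasContDiffBump E]
    (c : E) (b : ContDiffBump c) : 𝓢(E, ℂ) where
  toFun := fun x => (b x : ℂ)
  smooth' := Complex.ofRealCLM.contDiff.comp (contDiff_infty.mpr fun m => b.contDiff (n := m))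
  decay' := by
    intro k n
    have hsupp : HasCompactSupport (fun x : E => (b x : ℂ)) :=
      b.hasCompactSupport.comp_left (g := fun t : ℝ => (t : ℂ)) (by simp)
    have hsmooth : ContDiff ℝ ∞ (fun x : E => (b x : ℂ)) :=
      Complex.ofRealCLM.contDiff.comp (contDiff_infty.mpr fun m => b.contDiff (n := m))
    have hd : HasCompactSupport (iteratedFDeriv ℝ n (fun x : E => (b x : ℂ))) :=
      hsupp.iteratedFDeriv n
    have hcont : Continuous
        (fun x : E => ‖x‖ ^ k * ‖iteratedFDeriv ℝ n (fun x : E => (b x : ℂ)) x‖) :=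
      (continuous_norm.pow k).mul
        (hsmooth.continuous_iteratedFDeriv (by exact_mod_cast le_top)).norm
    have hcs : HasCompactSupport
        (fun x : E => ‖x‖ ^ k * ‖iteratedFDeriv ℝ n (fun x : E => (b x : ℂ)) x‖) := by
      apply hd.norm.mono'
      intro x hx
      apply subset_tsupport
      simp only [Function.mem_support] at hx ⊢
      intro h0
      rw [h0, mul_zero] at hx
      exact hx rfl
    obtain ⟨C, hC⟩ := hcont.bounded_above_of_compact_support hcs
    refine ⟨C, fun x => ?_⟩
    have := hC x
    rw [Real.norm_eq_abs] at this
    exact (le_abs_self _).trans this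

@[simp] private lemma bumpSM_apply [FiniteDimensional ℝ E] [HasContDiffBump E]
    (c : E) (b : ContDiffBump c) (x : E) : bumpSM c b x = (b x : ℂ) := rfl

end Aux

section Key

variable {n : ℕ}

private lemma key_lemma
    (U : SchwartzMap (EuclideanSpace ℝ (Fin n)) ℂ → SchwartzMap (EuclideanSpace ℝ (Fin n)) ℂ)
    (hsurj : Function.Surjective U)
    (hadd : ∀ f g x, U (f + g) x = U f x + U g x)
    (hmul : ∀ f g x, U (mulSM f g) x = U f x * U g x)
    (x₀ y : EuclideanSpace ℝ (Fin n))
    (hy : ∀ f, f x₀ ≠ 0 → U f y ≠ 0)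
    (f : SchwartzMap (EuclideanSpace ℝ (Fin n)) ℂ) (hf : f x₀ = 0) : U f y = 0 := by
  by_contra hc
  -- we derive that every Schwartz function vanishes at x₀, a contradiction.
  have claim : ∀ h : SchwartzMap (EuclideanSpace ℝ (Fin n)) ℂ, h x₀ = 0 := by
    intro h
    -- bump at y with value 1
    set b0 : ContDiffBump y := ⟨1, 2, one_pos, one_lt_two⟩ with hb0
    set B : SchwartzMap (EuclideanSpace ℝ (Fin n)) ℂ := bumpSM y b0
    have hb0y : b0 y = 1 := b0.one_of_mem_closedBall (mem_closedBall_self zero_le_one)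
    have hB : B y = 1 := by
      simp only [B, bumpSM_apply, hb0y, Complex.ofReal_one]
    obtain ⟨g, hg⟩ := hsurj ((-(U h y) / U f y) • B)
    have hUg : U g y = -(U h y) / U f y := by
      rw [hg]; simp [hB]
    have hw0 : mulSM f g x₀ = 0 := by simp [hf]
    have hχw : U (mulSM f g) y = -(U h y) := by
      rw [hmul, hUg]
      field_simp
    have hsum : U (h + mulSM f g) y = 0 := by
      rw [hadd, hχw]; ring
    have hx : (h + mulSM f g) x₀ = 0 := by
      by_contra hne
      exact hy _ hne hsum
    simpa [hw0] using hx
  -- bump at x₀ with value 1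
  set b1 : ContDiffBump x₀ := ⟨1, 2, one_pos, one_lt_two⟩ with hb1
  have hb1x : b1 x₀ = 1 := b1.one_of_mem_closedBall (mem_closedBall_self zero_le_one)
  have : (bumpSM x₀ b1 : SchwartzMap (EuclideanSpace ℝ (Fin n)) ℂ) x₀ = 1 := by
    simp only [bumpSM_apply, hb1x, Complex.ofReal_one]
  rw [claim _] at this
  exact zero_ne_one this

end Key

theorem stmt7 (n : ℕ)
    (U : SchwartzMap (EuclideanSpace ℝ (Fin n)) ℂ → SchwartzMap (EuclideanSpace ℝ (Fin n)) ℂ)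
    (hbij : Function.Bijective U)
    (h1 : ∀ f g fg : SchwartzMap (EuclideanSpace ℝ (Fin n)) ℂ,
      (∀ x, fg x = f x + conj (g (-x))) →
      ∀ x, U fg x = U f x + conj (U g (-x)))
    (h2 : ∀ f g fg : SchwartzMap (EuclideanSpace ℝ (Fin n)) ℂ,
      (∀ x, fg x = f x * g x) →
      ∀ x, U fg x = U f x * U g x)
    (h3 : ∀ f g fg : SchwartzMap (EuclideanSpace ℝ (Fin n)) ℂ,
      (∀ x, fg x = ∫ y, f (x - y) * g y) →
      ∀ x, U fg x = ∫ y, U f (x - y) * U g y)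
    (x₀ y₁ y₂ : EuclideanSpace ℝ (Fin n))
    (hy₁ : ∀ f : SchwartzMap (EuclideanSpace ℝ (Fin n)) ℂ, f x₀ ≠ 0 → U f y₁ ≠ 0)
    (hy₂ : ∀ f : SchwartzMap (EuclideanSpace ℝ (Fin n)) ℂ, f x₀ ≠ 0 → U f y₂ ≠ 0) :
    y₁ = y₂ := by
  -- Step A : U 0 = 0
  have hU0 : ∀ x, U 0 x = 0 := by
    intro x
    have h := h1 0 0 0 (fun x => by simp) (-x)
    have : conj (U 0 (- -x)) = 0 := by linear_combination -h
    rw [neg_neg] at this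
    have := congrArg conj this
    simpa using this
  -- Step B : conj (U (starSM h) (-x)) = U h x
  have hstar : ∀ (h : SchwartzMap (EuclideanSpace ℝ (Fin n)) ℂ) (x),
      conj (U (starSM h) (-x)) = U h x := by
    intro h x
    have := h1 0 (starSM h) h (fun x => by simp) x
    rw [this, hU0]
    ring
  -- Step C : additivity
  have hadd : ∀ f g x, U (f + g) x = U f x + U g x := by
    intro f g x
    have := h1 f (starSM g) (f + g) (fun x => by simp) x
    rw [this, hstar]
  -- Step D : multiplicativity
  have hmul : ∀ f g x, U (mulSM f g) x = U f x * U g x := by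
    intro f g x
    exact h2 f g (mulSM f g) (fun x => by simp) x
  -- conclusion
  by_contra hne
  have hd : 0 < dist y₂ y₁ := dist_pos.mpr (Ne.symm hne)
  set b : ContDiffBump y₁ :=
    ⟨dist y₂ y₁ / 2, dist y₂ y₁, half_pos hd, half_lt_self hd⟩
  set G : SchwartzMap (EuclideanSpace ℝ (Fin n)) ℂ := bumpSM y₁ b
  have hby : b y₁ = 1 := b.one_of_mem_closedBall (mem_closedBall_self (half_pos hd).le)
  have hby2 : b y₂ = 0 := b.zero_of_le_dist (le_refl _)
  have hG1 : G y₁ = 1 := by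
    simp only [G, bumpSM_apply, hby, Complex.ofReal_one]
  have hG2 : G y₂ = 0 := by
    simp only [G, bumpSM_apply, hby2, Complex.ofReal_zero]
  obtain ⟨f, hf⟩ := hbij.2 G
  by_cases hfx : f x₀ = 0
  · have := key_lemma U hbij.2 hadd hmul x₀ y₁ hy₁ f hfx
    rw [hf, hG1] at this
    exact one_ne_zero this
  · have := hy₂ f hfx
    rw [hf, hG2] at this
    exact this rfl
end

section
/- Let U : 𝓢(ℝⁿ) → 𝓢(ℝⁿ) be a bijection satisfying, for all f, g ∈ 𝓢(ℝⁿ): (1) U(f + g*) = U(f) + (U(g))*, where h*(x) := conj(h(−x)); (2) U(f·g) = U(f)·U(g); (3) U(f ⋆ g) = U(f) ⋆ U(g). Let φ : ℝⁿ → ℝⁿ be a bijection satisfying φ(Supp f) = Supp (U f) for every f ∈ 𝓢(ℝⁿ). Then φ is a homeomorphism of ℝⁿ onto itself (both φ and φ⁻¹ are continuous). -/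
open MeasureTheory
open scoped FourierTransform ComplexConjugate

noncomputable section

namespace Stmt9Aux

open Metric Set Function Polynomial
open scoped SchwartzMap ContDiff

/-! ### Gaussian bounds -/

lemma monomial_gauss_bound (m : ℕ) (x : ℝ) :
    |x| ^ m * Real.exp (-(x ^ 2 / 2)) ≤ 2 ^ m * m.factorial + 1 := by
  have hfac : (1 : ℝ) ≤ m.factorial := by
    exact_mod_cast Nat.one_le_iff_ne_zero.2 m.factorial_ne_zero
  have h2m : (1 : ℝ) ≤ 2 ^ m := one_le_pow₀ one_le_two
  rcases le_total |x| 1 with h | h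
  · have h1 : |x| ^ m ≤ 1 := pow_le_one₀ (abs_nonneg x) h
    have h2 : Real.exp (-(x ^ 2 / 2)) ≤ 1 := Real.exp_le_one_iff.2 (by nlinarith [sq_nonneg x])
    nlinarith [pow_nonneg (abs_nonneg x) m]
  · have key : (x ^ 2 / 2) ^ m / m.factorial ≤ Real.exp (x ^ 2 / 2) :=
      Real.pow_div_factorial_le_exp (x ^ 2 / 2) (by positivity) m
    rw [div_le_iff₀ (by positivity : (0:ℝ) < (m.factorial : ℝ))] at key
    have h1 : |x| ^ m ≤ (x ^ 2) ^ m := by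
      have : |x| ^ m ≤ (|x| ^ 2) ^ m :=
        pow_le_pow_left₀ (abs_nonneg x) (by nlinarith [abs_nonneg x]) m
      rwa [sq_abs] at this
    have h2 : (x ^ 2) ^ m * Real.exp (-(x ^ 2 / 2)) ≤ 2 ^ m * m.factorial := by
      rw [Real.exp_neg, mul_comm, inv_mul_le_iff₀ (Real.exp_pos _)]
      have hxx : (x ^ 2) ^ m = 2 ^ m * (x ^ 2 / 2) ^ m := by rw [← mul_pow]; ring_nf
      rw [hxx]
      calc (2:ℝ) ^ m * (x ^ 2 / 2) ^ m ≤ 2 ^ m * (Real.exp (x ^ 2 / 2) * m.factorial) := by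
            gcongr
        _ = Real.exp (x ^ 2 / 2) * (2 ^ m * m.factorial) := by ring
    have := mul_le_mul_of_nonneg_right h1 (Real.exp_pos (-(x ^ 2 / 2))).le
    linarith

lemma poly_gauss_bound (k : ℕ) (p : Polynomial ℝ) :
    ∃ C : ℝ, ∀ x : ℝ, |x| ^ k * |p.eval x| * Real.exp (-(x ^ 2 / 2)) ≤ C := by
  induction p using Polynomial.induction_on' with
  | add p q hp hq =>
    obtain ⟨Cp, hCp⟩ := hp
    obtain ⟨Cq, hCq⟩ := hq
    refine ⟨Cp + Cq, fun x => ?_⟩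
    have habs : |(p + q).eval x| ≤ |p.eval x| + |q.eval x| := by
      rw [Polynomial.eval_add]; exact abs_add_le _ _
    calc |x| ^ k * |(p + q).eval x| * Real.exp (-(x ^ 2 / 2))
        ≤ |x| ^ k * (|p.eval x| + |q.eval x|) * Real.exp (-(x ^ 2 / 2)) := by
          apply mul_le_mul_of_nonneg_right _ (Real.exp_pos _).le
          exact mul_le_mul_of_nonneg_left habs (by positivity)
      _ = |x| ^ k * |p.eval x| * Real.exp (-(x ^ 2 / 2))
          + |x| ^ k * |q.eval x| * Real.exp (-(x ^ 2 / 2)) := by ring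
      _ ≤ Cp + Cq := add_le_add (hCp x) (hCq x)
  | monomial i a =>
    refine ⟨|a| * (2 ^ (k + i) * (k + i).factorial + 1), fun x => ?_⟩
    have : |x| ^ k * |(Polynomial.monomial i a).eval x| * Real.exp (-(x ^ 2 / 2))
        = |a| * (|x| ^ (k + i) * Real.exp (-(x ^ 2 / 2))) := by
      rw [Polynomial.eval_monomial, abs_mul, abs_pow, pow_add]
      ring
    rw [this]
    exact mul_le_mul_of_nonneg_left (monomial_gauss_bound (k + i) x) (abs_nonneg a)

/-- The 1D gaussian as a Schwartz function. -/
def gauss1 : 𝓢(ℝ, ℝ) where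
  toFun := fun y => Real.exp (-(y ^ 2 / 2))
  smooth' := Real.contDiff_exp.comp (((contDiff_id.pow 2).div_const 2).neg)
  decay' := by
    intro k n
    obtain ⟨C, hC⟩ := poly_gauss_bound k ((Polynomial.hermite n).map (algebraMap ℤ ℝ))
    refine ⟨C, fun x => ?_⟩
    rw [norm_iteratedFDeriv_eq_norm_iteratedDeriv, iteratedDeriv_eq_iterate,
      Polynomial.deriv_gaussian_eq_hermite_mul_gaussian]
    have : Polynomial.aeval x (Polynomial.hermite n)
        = ((Polynomial.hermite n).map (algebraMap ℤ ℝ)).eval x := by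
      rw [Polynomial.aeval_def, Polynomial.eval_map]
    simp only [Real.norm_eq_abs]
    rw [abs_mul, abs_mul, abs_pow, abs_neg, abs_one, one_pow, one_mul,
      Real.abs_exp, this, ← mul_assoc]
    exact hC x

lemma gauss1_apply (t : ℝ) : gauss1 t = Real.exp (-(t ^ 2 / 2)) := rfl

/-! ### Temperate growth helpers -/

variable {E : Type*} [NormedAddCommGroup E] [NormedSpace ℝ E]
variable {F : Type*} [NormedAddCommGroup F] [NormedSpace ℝ F]

lemma htg_add {f g : E → F} (hf : Function.HasTemperateGrowth f)
    (hg : Function.HasTemperateGrowth g) :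
    Function.HasTemperateGrowth (fun x => f x + g x) := by
  refine ⟨hf.1.add hg.1, fun n => ?_⟩
  obtain ⟨k1, C1, h1⟩ := hf.2 n
  obtain ⟨k2, C2, h2⟩ := hg.2 n
  refine ⟨k1 + k2, max C1 0 + max C2 0, fun x => ?_⟩
  have hx : (1:ℝ) ≤ 1 + ‖x‖ := le_add_of_nonneg_right (norm_nonneg x)
  have e : iteratedFDeriv ℝ n (fun x => f x + g x) x
      = iteratedFDeriv ℝ n f x + iteratedFDeriv ℝ n g x :=
    iteratedFDeriv_add_apply (hf.1.contDiffAt.of_le (mod_cast le_top)) (hg.1.contDiffAt.of_le (mod_cast le_top))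
  rw [e]
  have b1 : ‖iteratedFDeriv ℝ n f x‖ ≤ max C1 0 * (1 + ‖x‖) ^ (k1 + k2) := by
    refine (h1 x).trans ?_
    have hp : (1 + ‖x‖) ^ k1 ≤ (1 + ‖x‖) ^ (k1 + k2) :=
      pow_le_pow_right₀ hx (Nat.le_add_right k1 k2)
    calc C1 * (1 + ‖x‖) ^ k1 ≤ max C1 0 * (1 + ‖x‖) ^ k1 :=
          mul_le_mul_of_nonneg_right (le_max_left _ _) (by positivity)
      _ ≤ max C1 0 * (1 + ‖x‖) ^ (k1 + k2) :=
          mul_le_mul_of_nonneg_left hp (le_max_right _ _)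
  have b2 : ‖iteratedFDeriv ℝ n g x‖ ≤ max C2 0 * (1 + ‖x‖) ^ (k1 + k2) := by
    refine (h2 x).trans ?_
    have hp : (1 + ‖x‖) ^ k2 ≤ (1 + ‖x‖) ^ (k1 + k2) :=
      pow_le_pow_right₀ hx (Nat.le_add_left k2 k1)
    calc C2 * (1 + ‖x‖) ^ k2 ≤ max C2 0 * (1 + ‖x‖) ^ k2 :=
          mul_le_mul_of_nonneg_right (le_max_left _ _) (by positivity)
      _ ≤ max C2 0 * (1 + ‖x‖) ^ (k1 + k2) :=
          mul_le_mul_of_nonneg_left hp (le_max_right _ _)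
  calc ‖iteratedFDeriv ℝ n f x + iteratedFDeriv ℝ n g x‖
      ≤ ‖iteratedFDeriv ℝ n f x‖ + ‖iteratedFDeriv ℝ n g x‖ := norm_add_le _ _
    _ ≤ max C1 0 * (1 + ‖x‖) ^ (k1 + k2) + max C2 0 * (1 + ‖x‖) ^ (k1 + k2) := add_le_add b1 b2
    _ = (max C1 0 + max C2 0) * (1 + ‖x‖) ^ (k1 + k2) := by ring

lemma bdd_uniform {g : ℝ → ℝ}
    (hbd : ∀ i : ℕ, ∃ C, ∀ t, ‖iteratedFDeriv ℝ i g t‖ ≤ C) (n : ℕ) :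
    ∃ D, 0 ≤ D ∧ ∀ i ≤ n, ∀ t, ‖iteratedFDeriv ℝ i g t‖ ≤ D := by
  induction n with
  | zero =>
    obtain ⟨C, hC⟩ := hbd 0
    exact ⟨max C 0, le_max_right _ _, fun i hi t => by
      rw [Nat.le_zero.1 hi]; exact (hC t).trans (le_max_left _ _)⟩
  | succ n ih =>
    obtain ⟨D, hD0, hD⟩ := ih
    obtain ⟨C, hC⟩ := hbd (n + 1)
    refine ⟨max D (max C 0), le_trans hD0 (le_max_left _ _), fun i hi t => ?_⟩
    rcases Nat.lt_succ_iff_lt_or_eq.1 (Nat.lt_succ_of_le hi) with h | h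
    · exact (hD i (Nat.lt_succ_iff.1 h) t).trans (le_max_left _ _)
    · subst h; exact (hC t).trans (le_trans (le_max_left _ _) (le_max_right _ _))

lemma htg_comp_bounded {g : ℝ → ℝ} (hg : ContDiff ℝ ∞ g)
    (hbd : ∀ i : ℕ, ∃ C, ∀ t, ‖iteratedFDeriv ℝ i g t‖ ≤ C)
    {p : E → ℝ} (hp : Function.HasTemperateGrowth p) :
    Function.HasTemperateGrowth (fun x => g (p x)) := by
  refine ⟨hg.comp hp.1, fun n => ?_⟩
  obtain ⟨D, hD0, hD⟩ := bdd_uniform hbd n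
  obtain ⟨l, C, hC0, hgrow⟩ := hp.norm_iteratedFDeriv_le_uniform n
  refine ⟨l * n, n.factorial * D * (C + 1) ^ n, fun x => ?_⟩
  have hone : (1:ℝ) ≤ (1 + ‖x‖) ^ l := one_le_pow₀ (le_add_of_nonneg_right (norm_nonneg x))
  have hbase : (1:ℝ) ≤ (C + 1) * (1 + ‖x‖) ^ l := by nlinarith
  have hpgrow : ∀ i, 1 ≤ i → i ≤ n →
      ‖iteratedFDeriv ℝ i p x‖ ≤ ((C + 1) * (1 + ‖x‖) ^ l) ^ i := by
    intro i h1 h2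
    refine (hgrow i h2 x).trans ?_
    have step1 : C * (1 + ‖x‖) ^ l ≤ (C + 1) * (1 + ‖x‖) ^ l :=
      mul_le_mul_of_nonneg_right (by linarith) (by positivity)
    exact step1.trans (le_self_pow₀ hbase (Nat.one_le_iff_ne_zero.1 h1))
  have key := norm_iteratedFDeriv_comp_le hg hp.1 (mod_cast le_top) x
    (fun i hi => hD i hi (p x)) hpgrow
  refine le_trans (le_of_eq ?_) (key.trans ?_)
  · rfl
  · rw [mul_pow, ← pow_mul]
    exact le_of_eq (by ring)

lemma iteratedFDeriv_congr_nhds {f₁ f : ℝ → ℝ} {x : ℝ} (h : f₁ =ᶠ[nhds x] f) (n : ℕ) :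
    iteratedFDeriv ℝ n f₁ x = iteratedFDeriv ℝ n f x := by
  rw [← iteratedFDerivWithin_univ, ← iteratedFDerivWithin_univ]
  exact Filter.EventuallyEq.iteratedFDerivWithin_eq
    (by rwa [nhdsWithin_univ]) (h.self_of_nhds) n

lemma smoothTransition_deriv_bound (i : ℕ) :
    ∃ C, ∀ t : ℝ, ‖iteratedFDeriv ℝ i Real.smoothTransition t‖ ≤ C := by
  rcases eq_or_ne i 0 with rfl | hi
  · refine ⟨1, fun t => ?_⟩
    rw [norm_iteratedFDeriv_zero, Real.norm_eq_abs,
      abs_of_nonneg (Real.smoothTransition.nonneg t)]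
    exact Real.smoothTransition.le_one t
  · have hcont : Continuous (iteratedFDeriv ℝ i Real.smoothTransition) :=
      (Real.smoothTransition.contDiff (n := ⊤)).continuous_iteratedFDeriv (mod_cast le_top)
    have hzero : ∀ t : ℝ, t ∉ Icc (0:ℝ) 1 → iteratedFDeriv ℝ i Real.smoothTransition t = 0 := by
      intro t ht
      simp only [Set.mem_Icc, not_and_or, not_le] at ht
      rcases ht with h | h
      · have heq : Real.smoothTransition =ᶠ[nhds t] (fun _ => (0:ℝ)) := by
          filter_upwards [Iio_mem_nhds h] with s hs
          exact Real.smoothTransition.zero_of_nonpos (le_of_lt hs)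
        rw [iteratedFDeriv_congr_nhds heq i, iteratedFDeriv_const_of_ne hi]
        rfl
      · have heq : Real.smoothTransition =ᶠ[nhds t] (fun _ => (1:ℝ)) := by
          filter_upwards [Ioi_mem_nhds h] with s hs
          exact Real.smoothTransition.one_of_one_le (le_of_lt hs)
        rw [iteratedFDeriv_congr_nhds heq i, iteratedFDeriv_const_of_ne hi]
        rfl
    have hcs : HasCompactSupport (iteratedFDeriv ℝ i Real.smoothTransition) :=
      HasCompactSupport.intro isCompact_Icc hzero
    exact hcs.exists_bound_of_continuous hcont

/-! ### Temperate growth of quadratic functions on inner product spaces -/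

variable {H : Type*} [NormedAddCommGroup H] [InnerProductSpace ℝ H]

lemma htg_inner_self : Function.HasTemperateGrowth (fun x : H => (inner ℝ x x : ℝ)) := by
  have hd : ∀ x : H, HasFDerivAt (fun y : H => (inner ℝ y y : ℝ))
      (((2:ℝ) • (innerSL ℝ : H →L[ℝ] H →L[ℝ] ℝ)) x) x := by
    intro x
    have h := (hasFDerivAt_id x).inner (𝕜 := ℝ) (hasFDerivAt_id x)
    refine h.congr_fderiv ?_
    symm
    ext y : 1
    simp only [ContinuousLinearMap.smul_apply, innerSL_apply_apply, ContinuousLinearMap.comp_apply,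
      ContinuousLinearMap.prod_apply, ContinuousLinearMap.coe_id', id_eq, fderivInnerCLM_apply]
    rw [real_inner_comm x y, smul_eq_mul]
    ring
  have hfd : fderiv ℝ (fun y : H => (inner ℝ y y : ℝ))
      = ⇑((2:ℝ) • (innerSL ℝ : H →L[ℝ] H →L[ℝ] ℝ)) := funext fun x => (hd x).fderiv
  refine Function.HasTemperateGrowth.of_fderiv ?_ (fun x => (hd x).differentiableAt)
    (k := 2) (C := 1) (fun x => ?_)
  · rw [hfd]
    exact ((2:ℝ) • (innerSL ℝ : H →L[ℝ] H →L[ℝ] ℝ)).hasTemperateGrowth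
  · rw [real_inner_self_eq_norm_sq, Real.norm_eq_abs, abs_of_nonneg (by positivity)]
    nlinarith [norm_nonneg x]

lemma htg_normsq : Function.HasTemperateGrowth (fun x : H => ‖x‖ ^ 2) := by
  have e : (fun x : H => (inner ℝ x x : ℝ)) = fun x : H => ‖x‖ ^ 2 :=
    funext fun x => real_inner_self_eq_norm_sq x
  exact e ▸ htg_inner_self

lemma htg_shifted_normsq (b : H) (ε : ℝ) :
    Function.HasTemperateGrowth (fun x : H => ‖x - b‖ ^ 2 - ε ^ 2) := by
  have e : (fun x : H => ‖x - b‖ ^ 2 - ε ^ 2)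
      = fun x : H => (‖x‖ ^ 2 + (((-2:ℝ) • (innerSL ℝ : H →L[ℝ] H →L[ℝ] ℝ)) b) x)
        + (‖b‖ ^ 2 - ε ^ 2) := by
    funext x
    have h := norm_sub_sq_real x b
    simp only [ContinuousLinearMap.smul_apply, innerSL_apply_apply, smul_eq_mul]
    rw [h]
    have hbx : (inner ℝ b x : ℝ) = inner ℝ x b := real_inner_comm x b
    rw [hbx]
    ring
  rw [e]
  exact htg_add (htg_add htg_normsq
      (((-2:ℝ) • (innerSL ℝ : H →L[ℝ] H →L[ℝ] ℝ)) b).hasTemperateGrowth)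
    (Function.HasTemperateGrowth.const _)

/-! ### A Schwartz function supported exactly on the complement of a ball -/

lemma exists_schwartz_tsupport_compl_ball (b : H) {ε : ℝ} (hε : 0 < ε) :
    ∃ f : 𝓢(H, ℂ), tsupport ⇑f = (Metric.ball b ε)ᶜ := by
  have hq := htg_normsq (H := H)
  have hup : ∃ (k : ℕ) (C : ℝ), ∀ x : H, ‖x‖ ≤ C * (1 + ‖(fun x : H => ‖x‖ ^ 2) x‖) ^ k := by
    refine ⟨1, 1, fun x => ?_⟩
    simp only [pow_one, one_mul, Real.norm_eq_abs,
      abs_of_nonneg (by positivity : (0:ℝ) ≤ ‖x‖ ^ 2)]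
    nlinarith [norm_nonneg x]
  let G : 𝓢(H, ℝ) := SchwartzMap.compCLM ℝ hq hup gauss1
  have hm : Function.HasTemperateGrowth
      (fun x : H => Real.smoothTransition (‖x - b‖ ^ 2 - ε ^ 2)) :=
    htg_comp_bounded (Real.smoothTransition.contDiff (n := ⊤)) smoothTransition_deriv_bound
      (htg_shifted_normsq b ε)
  let B : ℝ →L[ℝ] ℝ →L[ℝ] ℂ :=
    ((ContinuousLinearMap.compL ℝ ℝ ℝ ℂ) Complex.ofRealCLM).comp (ContinuousLinearMap.mul ℝ ℝ)
  refine ⟨SchwartzMap.bilinLeftCLM B hm G, ?_⟩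
  have hval : ∀ x : H, (SchwartzMap.bilinLeftCLM B hm G) x
      = ((gauss1 (‖x‖ ^ 2) * Real.smoothTransition (‖x - b‖ ^ 2 - ε ^ 2) : ℝ) : ℂ) :=
    fun x => rfl
  have hsupp : Function.support ⇑(SchwartzMap.bilinLeftCLM B hm G)
      = (Metric.closedBall b ε)ᶜ := by
    ext x
    simp only [Function.mem_support, mem_compl_iff, Metric.mem_closedBall, not_le,
      dist_eq_norm]
    rw [hval x, ne_eq, Complex.ofReal_eq_zero, mul_eq_zero, not_or]
    have hg : ¬ gauss1 (‖x‖ ^ 2) = 0 := by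
      rw [gauss1_apply]; exact (Real.exp_pos _).ne'
    have hiff : ¬ Real.smoothTransition (‖x - b‖ ^ 2 - ε ^ 2) = 0 ↔ ε < ‖x - b‖ := by
      rw [Real.smoothTransition.zero_iff_nonpos, not_le, sub_pos]
      constructor
      · intro hlt
        nlinarith [norm_nonneg (x - b), hε]
      · intro hlt
        nlinarith [norm_nonneg (x - b), hε]
    constructor
    · rintro ⟨-, hm0⟩; exact hiff.1 hm0
    · intro hlt; exact ⟨hg, hiff.2 hlt⟩
  rw [tsupport, hsupp, closure_compl, interior_closedBall b (ne_of_gt hε)]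

end Stmt9Aux

end

theorem stmt9 (n : ℕ)
    (U : SchwartzMap (EuclideanSpace ℝ (Fin n)) ℂ → SchwartzMap (EuclideanSpace ℝ (Fin n)) ℂ)
    (hbij : Function.Bijective U)
    (h1 : ∀ f g fg : SchwartzMap (EuclideanSpace ℝ (Fin n)) ℂ,
      (∀ x, fg x = f x + conj (g (-x))) →
      ∀ x, U fg x = U f x + conj (U g (-x)))
    (h2 : ∀ f g fg : SchwartzMap (EuclideanSpace ℝ (Fin n)) ℂ,
      (∀ x, fg x = f x * g x) →
      ∀ x, U fg x = U f x * U g x)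
    (h3 : ∀ f g fg : SchwartzMap (EuclideanSpace ℝ (Fin n)) ℂ,
      (∀ x, fg x = ∫ y, f (x - y) * g y) →
      ∀ x, U fg x = ∫ y, U f (x - y) * U g y)
    (φ : EuclideanSpace ℝ (Fin n) → EuclideanSpace ℝ (Fin n))
    (hφbij : Function.Bijective φ)
    (hφ : ∀ f : SchwartzMap (EuclideanSpace ℝ (Fin n)) ℂ, φ '' tsupport (⇑f) = tsupport (⇑(U f))) :
    ∃ ψ : EuclideanSpace ℝ (Fin n) ≃ₜ EuclideanSpace ℝ (Fin n), ⇑ψ = φ := by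
  classical
  have key1 : ∀ (b : EuclideanSpace ℝ (Fin n)) (ε : ℝ), 0 < ε →
      IsOpen (φ ⁻¹' Metric.ball b ε) := by
    intro b ε hε
    obtain ⟨g, hg⟩ := Stmt9Aux.exists_schwartz_tsupport_compl_ball b hε
    obtain ⟨f0, hf0⟩ := hbij.surjective g
    have himg : φ '' tsupport ⇑f0 = (Metric.ball b ε)ᶜ := by rw [hφ f0, hf0, hg]
    have hpre : φ ⁻¹' (Metric.ball b ε)ᶜ = tsupport ⇑f0 := by
      rw [← himg, Function.Injective.preimage_image hφbij.injective]
    have heq : φ ⁻¹' Metric.ball b ε = (tsupport ⇑f0)ᶜ := by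
      rw [← hpre, ← Set.preimage_compl, compl_compl]
    rw [heq]
    exact (isClosed_tsupport _).isOpen_compl
  have key2 : ∀ (b : EuclideanSpace ℝ (Fin n)) (ε : ℝ), 0 < ε →
      IsOpen (φ '' Metric.ball b ε) := by
    intro b ε hε
    obtain ⟨g, hg⟩ := Stmt9Aux.exists_schwartz_tsupport_compl_ball b hε
    have himg : φ '' (Metric.ball b ε)ᶜ = tsupport ⇑(U g) := by rw [← hφ g, hg]
    have heq : φ '' Metric.ball b ε = (tsupport ⇑(U g))ᶜ := by
      rw [← compl_compl (Metric.ball b ε), Set.image_compl_eq hφbij, himg]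
    rw [heq]
    exact (isClosed_tsupport _).isOpen_compl
  have contOf : ∀ g : EuclideanSpace ℝ (Fin n) → EuclideanSpace ℝ (Fin n),
      (∀ (b : EuclideanSpace ℝ (Fin n)) (ε : ℝ), 0 < ε → IsOpen (g ⁻¹' Metric.ball b ε)) →
      Continuous g := by
    intro g hgopen
    rw [continuous_def]
    intro V hV
    rw [isOpen_iff_mem_nhds]
    intro a ha
    obtain ⟨ε, hε, hsub⟩ := Metric.isOpen_iff.1 hV (g a) ha
    exact Filter.mem_of_superset
      ((hgopen (g a) ε hε).mem_nhds (Set.mem_preimage.2 (Metric.mem_ball_self hε)))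
      (fun y hy => hsub hy)
  refine ⟨{ toEquiv := Equiv.ofBijective φ hφbij
            continuous_toFun := contOf φ key1
            continuous_invFun := ?_ }, rfl⟩
  apply contOf
  intro b ε hε
  have heq : (Equiv.ofBijective φ hφbij).symm ⁻¹' Metric.ball b ε = φ '' Metric.ball b ε := by
    rw [← Equiv.image_eq_preimage_symm]
    rfl
  show IsOpen ((Equiv.ofBijective φ hφbij).symm ⁻¹' Metric.ball b ε)
  rw [heq]
  exact key2 b ε hε
end

section
/- Let U : 𝓢(ℝⁿ) → 𝓢(ℝⁿ) be a bijection satisfying, for all f, g ∈ 𝓢(ℝⁿ): (1) U(f + g*) = U(f) + (U(g))*, where h*(x) := conj(h(−x)); (2) U(f·g) = U(f)·U(g); (3) U(f ⋆ g) = U(f) ⋆ U(g). Let φ : ℝⁿ → ℝⁿ be a bijection satisfying φ(Supp f) = Supp (U f) for every f ∈ 𝓢(ℝⁿ). Then φ(x + y) = φ(x) + φ(y) for all x, y ∈ ℝⁿ. -/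
open MeasureTheory Metric Function
open scoped ComplexConjugate Pointwise Topology Convolution ContDiff

variable {n : ℕ}

/-- A smooth compactly supported function is a Schwartz map. -/
noncomputable def mkSchwartz (f : EuclideanSpace ℝ (Fin n) → ℂ)
    (hsm : ContDiff ℝ ∞ f) (hcs : HasCompactSupport f) :
    SchwartzMap (EuclideanSpace ℝ (Fin n)) ℂ where
  toFun := f
  smooth' := hsm
  decay' := by
    intro k m
    have hc : Continuous fun x => ‖x‖ ^ k * ‖iteratedFDeriv ℝ m f x‖ :=
      (continuous_norm.pow k).mul
        ((hsm.continuous_iteratedFDeriv (by exact_mod_cast le_top)).norm)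
    have hcs' : HasCompactSupport fun x => ‖x‖ ^ k * ‖iteratedFDeriv ℝ m f x‖ :=
      ((hcs.iteratedFDeriv m).norm).mono (fun x hx => by
        simp only [mem_support, ne_eq, norm_eq_zero] at hx ⊢
        intro h
        exact hx (by rw [h, norm_zero, mul_zero]))
    obtain ⟨C, hC⟩ := hcs'.exists_bound_of_continuous hc
    refine ⟨C, fun x => ?_⟩
    calc ‖x‖ ^ k * ‖iteratedFDeriv ℝ m f x‖
        ≤ ‖‖x‖ ^ k * ‖iteratedFDeriv ℝ m f x‖‖ := le_abs_self _
      _ ≤ C := hC x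

@[simp] lemma mkSchwartz_apply (f : EuclideanSpace ℝ (Fin n) → ℂ) (hsm hcs) (x) :
    mkSchwartz f hsm hcs x = f x := rfl

/-- Existence of a complex-valued Schwartz bump with prescribed total support. -/
lemma exists_bump (c : EuclideanSpace ℝ (Fin n)) {ε : ℝ} (hε : 0 < ε) :
    ∃ (f : SchwartzMap (EuclideanSpace ℝ (Fin n)) ℂ) (rf : EuclideanSpace ℝ (Fin n) → ℝ),
      (∀ z, f z = (rf z : ℂ)) ∧ Continuous rf ∧ (∀ z, 0 ≤ rf z) ∧
      (∀ z ∈ closedBall c (ε / 2), rf z = 1) ∧ tsupport ⇑f = closedBall c ε := by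
  set b : ContDiffBump c := ⟨ε / 2, ε, by linarith, by linarith⟩ with hb
  have hsm : ContDiff ℝ ∞ (fun z => ((b z : ℝ) : ℂ)) :=
    Complex.ofRealCLM.contDiff.comp b.contDiff
  have hsupp : Function.support (fun z => ((b z : ℝ) : ℂ)) = Function.support ⇑b := by
    ext z; simp [Function.mem_support]
  have hcs : HasCompactSupport fun z => ((b z : ℝ) : ℂ) := by
    rw [HasCompactSupport, tsupport, hsupp]
    exact b.hasCompactSupport
  refine ⟨mkSchwartz _ hsm hcs, ⇑b, fun z => rfl, b.continuous, b.nonneg',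
    fun z hz => b.one_of_mem_closedBall hz, ?_⟩
  show tsupport (fun z => ((b z : ℝ) : ℂ)) = closedBall c ε
  rw [tsupport, hsupp, ← tsupport]
  exact b.tsupport_eq

lemma image_ball_compact
    (U : SchwartzMap (EuclideanSpace ℝ (Fin n)) ℂ → SchwartzMap (EuclideanSpace ℝ (Fin n)) ℂ)
    (h2 : ∀ f g fg : SchwartzMap (EuclideanSpace ℝ (Fin n)) ℂ,
      (∀ x, fg x = f x * g x) →
      ∀ x, U fg x = U f x * U g x)
    (φ : EuclideanSpace ℝ (Fin n) → EuclideanSpace ℝ (Fin n))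
    (hφ : ∀ f : SchwartzMap (EuclideanSpace ℝ (Fin n)) ℂ,
      φ '' tsupport (⇑f) = tsupport (⇑(U f)))
    (c : EuclideanSpace ℝ (Fin n)) {ε : ℝ} (hε : 0 < ε) :
    IsCompact (φ '' closedBall c ε) := by
  obtain ⟨f, rf, hfval, _, _, _, hfsupp⟩ := exists_bump c hε
  obtain ⟨g, rg, hgval, _, _, hgone, hgsupp⟩ := exists_bump c (by linarith : (0:ℝ) < 2 * ε)
  -- f = f * g since g = 1 on the support of f
  have hkey : ∀ z, f z = f z * g z := by
    intro z
    by_cases hz : f z = 0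
    · simp [hz]
    · have hz1 : z ∈ closedBall c ε := by
        rw [← hfsupp]
        exact subset_closure (Function.mem_support.2 hz)
      have : rg z = 1 := hgone z (by
        simp only [mem_closedBall] at hz1 ⊢
        linarith)
      rw [hgval, this]
      simp
  have hU := h2 f g f hkey
  -- the support of U f is contained in the set where U g = 1
  have hsub : tsupport ⇑(U f) ⊆ {z | U g z = 1} := by
    apply closure_minimal
    · intro z hz
      have hz' : U f z ≠ 0 := hz
      have := hU z
      have h1 : U f z * 1 = U f z * U g z := by rw [mul_one, ← this]
      exact (mul_left_cancel₀ hz' h1).symm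
    · exact isClosed_eq (U g).continuous continuous_const
  -- that set is bounded since U g decays
  obtain ⟨C, hCpos, hC⟩ := (U g).decay 1 0
  have hbdd : Bornology.IsBounded (tsupport ⇑(U f)) := by
    rw [Metric.isBounded_iff_subset_closedBall 0]
    refine ⟨C, fun z hz => ?_⟩
    have h1 : U g z = 1 := hsub hz
    have := hC z
    rw [norm_iteratedFDeriv_zero, h1, pow_one] at this
    simp only [mem_closedBall, dist_zero_right]
    simpa using this
  have : φ '' closedBall c ε = tsupport ⇑(U f) := by rw [← hfsupp, hφ]
  rw [this]
  exact Metric.isCompact_of_isClosed_isBounded (isClosed_tsupport _) hbdd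

lemma phi_add_mem
    (U : SchwartzMap (EuclideanSpace ℝ (Fin n)) ℂ → SchwartzMap (EuclideanSpace ℝ (Fin n)) ℂ)
    (h2 : ∀ f g fg : SchwartzMap (EuclideanSpace ℝ (Fin n)) ℂ,
      (∀ x, fg x = f x * g x) →
      ∀ x, U fg x = U f x * U g x)
    (h3 : ∀ f g fg : SchwartzMap (EuclideanSpace ℝ (Fin n)) ℂ,
      (∀ x, fg x = ∫ y, f (x - y) * g y) →
      ∀ x, U fg x = ∫ y, U f (x - y) * U g y)
    (φ : EuclideanSpace ℝ (Fin n) → EuclideanSpace ℝ (Fin n))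
    (hφ : ∀ f : SchwartzMap (EuclideanSpace ℝ (Fin n)) ℂ,
      φ '' tsupport (⇑f) = tsupport (⇑(U f)))
    (x y : EuclideanSpace ℝ (Fin n)) {ε : ℝ} (hε : 0 < ε) :
    φ (x + y) ∈ (φ '' closedBall x ε) + (φ '' closedBall y ε) := by
  obtain ⟨f, rf, hfval, hrfc, hrfnn, hfone, hfsupp⟩ := exists_bump x hε
  obtain ⟨g, rg, hgval, hrgc, hrgnn, hgone, hgsupp⟩ := exists_bump y hε
  have hfc : HasCompactSupport ⇑f := by
    rw [HasCompactSupport, hfsupp]; exact isCompact_closedBall x ε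
  have hgc : HasCompactSupport ⇑g := by
    rw [HasCompactSupport, hgsupp]; exact isCompact_closedBall y ε
  set F : EuclideanSpace ℝ (Fin n) → ℂ := fun z => ∫ t, f (z - t) * g t with hF
  have hFconv : F = ⇑g ⋆[ContinuousLinearMap.mul ℝ ℂ, volume] ⇑f := by
    funext z
    rw [hF, convolution_def]
    exact integral_congr_ae (Filter.Eventually.of_forall fun t => (mul_comm (g t) _).symm)
  have hsmF : ContDiff ℝ ∞ F := by
    rw [hFconv]
    exact hfc.contDiff_convolution_right _ ((g.continuous.integrable_of_hasCompactSupport hgc).locallyIntegrable)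
      (f.smooth ⊤)
  have hcsF : HasCompactSupport F := by
    rw [hFconv]
    exact HasCompactSupport.convolution _ hgc hfc
  set fg := mkSchwartz F hsmF hcsF with hfgdef
  have hfg : ∀ z, fg z = ∫ t, f (z - t) * g t := fun z => rfl
  have hUfg := h3 f g fg hfg
  -- `fg (x + y) ≠ 0`
  set h : EuclideanSpace ℝ (Fin n) → ℝ := fun t => rf (x + y - t) * rg t with hh
  have hrg_supp : Function.support rg = Function.support ⇑g := by
    ext t; simp [Function.mem_support, hgval]
  have hrgcs : HasCompactSupport rg := by
    rw [HasCompactSupport, tsupport, hrg_supp]; exact hgc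
  have hhc : Continuous h := (hrfc.comp (by fun_prop)).mul hrgc
  have hhcs : HasCompactSupport h :=
    hrgcs.mono (fun t ht => by
      simp only [Function.mem_support, ne_eq] at ht ⊢
      intro h0; exact ht (by rw [hh]; simp [h0]))
  have hhint : Integrable h := hhc.integrable_of_hasCompactSupport hhcs
  have hhnn : 0 ≤ h := fun t => mul_nonneg (hrfnn _) (hrgnn _)
  have hhy : h y = 1 := by
    have h1 : rf x = 1 := hfone x (by simp [mem_closedBall]; positivity)
    have h2 : rg y = 1 := hgone y (by simp [mem_closedBall]; positivity)
    simp [hh, h1, h2]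
  have hpos : 0 < ∫ t, h t := by
    rw [integral_pos_iff_support_of_nonneg hhnn hhint]
    have hopen : IsOpen (Function.support h) := isOpen_compl_singleton.preimage hhc
    exact hopen.measure_pos volume ⟨y, by simp [Function.mem_support, hhy]⟩
  have hne : fg (x + y) ≠ 0 := by
    have : fg (x + y) = ((∫ t, h t : ℝ) : ℂ) := by
      rw [hfg]
      rw [show (fun t => f (x + y - t) * g t) = fun t => ((h t : ℝ) : ℂ) by
        funext t; rw [hfval, hgval, hh]; push_cast; ring]
      exact integral_ofReal
    rw [this]
    exact_mod_cast hpos.ne'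
  have hmem : x + y ∈ tsupport ⇑fg := subset_closure (Function.mem_support.2 hne)
  have hmem' : φ (x + y) ∈ tsupport ⇑(U fg) := by
    rw [← hφ fg]; exact Set.mem_image_of_mem φ hmem
  -- the support of `U fg` is inside the sum of the supports
  have hUfC : IsCompact (tsupport ⇑(U f)) := by
    rw [← hφ f, hfsupp]; exact image_ball_compact U h2 φ hφ x hε
  have hUgC : IsCompact (tsupport ⇑(U g)) := by
    rw [← hφ g, hgsupp]; exact image_ball_compact U h2 φ hφ y hε
  have hsum : tsupport ⇑(U fg) ⊆ tsupport ⇑(U f) + tsupport ⇑(U g) := by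
    apply closure_minimal _ (hUfC.add hUgC).isClosed
    intro z hz
    by_contra hzS
    apply hz
    show U fg z = 0
    rw [hUfg z]
    rw [show (fun t => U f (z - t) * U g t) = fun _ => (0 : ℂ) by
      funext t
      by_cases h1 : U g t = 0
      · simp [h1]
      by_cases h2 : U f (z - t) = 0
      · simp [h2]
      exact absurd ⟨z - t, subset_closure (Function.mem_support.2 h2), t,
        subset_closure (Function.mem_support.2 h1), sub_add_cancel z t⟩ hzS]
    exact integral_zero _ _
  have := hsum hmem'
  rwa [← hφ f, ← hφ g, hfsupp, hgsupp] at this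

theorem stmt10 (n : ℕ)
    (U : SchwartzMap (EuclideanSpace ℝ (Fin n)) ℂ → SchwartzMap (EuclideanSpace ℝ (Fin n)) ℂ)
    (hbij : Function.Bijective U)
    (h1 : ∀ f g fg : SchwartzMap (EuclideanSpace ℝ (Fin n)) ℂ,
      (∀ x, fg x = f x + conj (g (-x))) →
      ∀ x, U fg x = U f x + conj (U g (-x)))
    (h2 : ∀ f g fg : SchwartzMap (EuclideanSpace ℝ (Fin n)) ℂ,
      (∀ x, fg x = f x * g x) →
      ∀ x, U fg x = U f x * U g x)
    (h3 : ∀ f g fg : SchwartzMap (EuclideanSpace ℝ (Fin n)) ℂ,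
      (∀ x, fg x = ∫ y, f (x - y) * g y) →
      ∀ x, U fg x = ∫ y, U f (x - y) * U g y)
    (φ : EuclideanSpace ℝ (Fin n) → EuclideanSpace ℝ (Fin n))
    (hφbij : Function.Bijective φ)
    (hφ : ∀ f : SchwartzMap (EuclideanSpace ℝ (Fin n)) ℂ, φ '' tsupport (⇑f) = tsupport (⇑(U f))) :
    ∀ x y : EuclideanSpace ℝ (Fin n), φ (x + y) = φ x + φ y := by
  intro x y
  have hεk : ∀ k : ℕ, (0:ℝ) < 1 / (k + 1) := fun k => by positivity
  have hmem : ∀ k : ℕ,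
      φ (x + y) ∈ (φ '' closedBall x (1/(k+1))) + (φ '' closedBall y (1/(k+1))) :=
    fun k => phi_add_mem U h2 h3 φ hφ x y (hεk k)
  choose u hu v hv huv using fun k => Set.mem_add.1 (hmem k)
  -- a point in all the image balls must be the image of the center
  have hsingle : ∀ (c a : EuclideanSpace ℝ (Fin n)),
      (∀ m : ℕ, a ∈ φ '' closedBall c (1/(m+1))) → a = φ c := by
    intro c a ha
    choose w hw hwa using ha
    have hww : ∀ m, w m = w 0 := fun m => hφbij.1 (by rw [hwa, hwa])
    have hdist : ∀ m : ℕ, dist (w 0) c ≤ 1/(m+1) := fun m => by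
      rw [← hww m]; exact mem_closedBall.1 (hw m)
    have h0 : dist (w 0) c ≤ 0 :=
      ge_of_tendsto' tendsto_one_div_add_atTop_nhds_zero_nat hdist
    have hwc : w 0 = c := by
      rw [← dist_eq_zero]; exact le_antisymm h0 dist_nonneg
    rw [← hwa 0, hwc]
  -- extract a convergent subsequence of the `u k`
  have huA1 : ∀ k : ℕ, u k ∈ φ '' closedBall x 1 := fun k =>
    Set.image_mono (f := φ) (closedBall_subset_closedBall (by
      rw [div_le_one (by positivity)]; linarith [(Nat.cast_nonneg k : (0:ℝ) ≤ k)])) (hu k)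
  obtain ⟨a, haA, σ, hσ, hconv⟩ :=
    (image_ball_compact U h2 φ hφ x one_pos).tendsto_subseq huA1
  have hsubset : ∀ (c : EuclideanSpace ℝ (Fin n)) (m j : ℕ), m ≤ j →
      closedBall c (1/((σ j : ℝ)+1)) ⊆ closedBall c (1/((m : ℝ)+1)) := by
    intro c m j hmj
    apply closedBall_subset_closedBall
    have h1 : (m : ℝ) + 1 ≤ (σ j : ℝ) + 1 := by
      have := (hσ.le_apply : j ≤ σ j)
      have : (m : ℝ) ≤ (σ j : ℝ) := by exact_mod_cast hmj.trans this
      linarith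
    exact one_div_le_one_div_of_le (by positivity) h1
  have ha : ∀ m : ℕ, a ∈ φ '' closedBall x (1/(m+1)) := by
    intro m
    refine (image_ball_compact U h2 φ hφ x (hεk m)).isClosed.mem_of_tendsto hconv ?_
    filter_upwards [Filter.eventually_ge_atTop m] with j hj
    exact Set.image_mono (f := φ) (hsubset x m j hj) (hu (σ j))
  have hax : a = φ x := hsingle x a ha
  have hvconv : Filter.Tendsto (fun j => v (σ j)) Filter.atTop (nhds (φ (x+y) - a)) := by
    have heq : (fun j => v (σ j)) = fun j => φ (x+y) - u (σ j) := by
      funext j; rw [← huv (σ j)]; abel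
    rw [heq]
    exact Filter.Tendsto.sub tendsto_const_nhds hconv
  have hb : ∀ m : ℕ, φ (x+y) - a ∈ φ '' closedBall y (1/(m+1)) := by
    intro m
    refine (image_ball_compact U h2 φ hφ y (hεk m)).isClosed.mem_of_tendsto hvconv ?_
    filter_upwards [Filter.eventually_ge_atTop m] with j hj
    exact Set.image_mono (f := φ) (hsubset y m j hj) (hv (σ j))
  have hby : φ (x+y) - a = φ y := hsingle y _ hb
  rw [hax] at hby
  rw [← hby]
  abel
end
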